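/- Let Γ be a uniform layered graph with unique minimal vertex. Then A(Γ) ≅ T(V^+)/R_V, where R_V is the ideal of T(V^+) generated by the quadratic elements v(u−w) − u² + w² + (u−w)x, taken over all v ∈ ∪_{i≥2} V_i, u, w ∈ S_1(v), and x ∈ S_1(u) ∩ S_1(w). -/

import Mathlib

noncomputable section

/-- A layered directed graph: vertices come with a rank (layer), and each
edge goes from a vertex of rank `j+1` to a vertex of rank `j`. -/
structure LayeredGraph where
  V : Type
  E : Type
  rank : V → ℕ
  tail : E → V
  head : E → V
  rank_tail : ∀ e, rank (tail e) = rank (head e) + 1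

namespace LayeredGraph

variable (G : LayeredGraph)

/-- `V₀ = {*}`: there is a unique vertex of rank `0`. -/
def HasUniqueMin : Prop := ∃ s : G.V, G.rank s = 0 ∧ ∀ v, G.rank v = 0 → v = s

/-- Every vertex of `V⁺` has at least one outgoing edge. -/
def EdgeFull : Prop := ∀ v, G.rank v ≠ 0 → ∃ e, G.tail e = v

/-- `u` covers `w`: there is an edge from `u` to `w`. -/
def adj (u w : G.V) : Prop := ∃ e, G.tail e = u ∧ G.head e = w

/-- `v ≥ u` with a prescribed rank drop `j` (this is `u ∈ S_j(v)`;
for `j = 0` it forces `u = v`). -/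
def SRel (v u : G.V) (j : ℕ) : Prop :=
  Relation.ReflTransGen G.adj v u ∧ G.rank u + j = G.rank v

/-- A uniform layered graph: for each vertex `v` of rank `≥ 2`, all elements of
`S₁(v)` are equivalent under the equivalence relation generated by
`u ∼ w ↔ S₁(u) ∩ S₁(w) ≠ ∅`. -/
def Uniform : Prop := ∀ v u w, 2 ≤ G.rank v → G.adj v u → G.adj v w →
  Relation.EqvGen (fun a b => G.adj v a ∧ G.adj v b ∧ ∃ x, G.adj a x ∧ G.adj b x) u w

/-- A (nonempty) directed path: a nonempty list of composable edges. -/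
def IsPathList (l : List G.E) : Prop :=
  l ≠ [] ∧ l.Chain' (fun e f => G.head e = G.tail f)

/-- The tail (initial vertex) of a path, as an `Option`. -/
def firstV (l : List G.E) : Option G.V := l.head?.map G.tail

/-- The head (final vertex) of a path, as an `Option`. -/
def lastV (l : List G.E) : Option G.V := l.getLast?.map G.head

/-- The list `v₀, v₁, …, v_m` of vertices visited by a path. -/
def pathVerts (l : List G.E) : List G.V :=
  match l with
  | [] => []
  | e :: _ => G.tail e :: l.map G.head

/-- The type `V⁺` of vertices of positive rank. -/
def Vp := {v : G.V // G.rank v ≠ 0}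

variable (F : Type) [Field F]

/-- The coefficient `e(π,k)` of `t^k` in `P_π(t) = (1 - te₁)⋯(1 - te_m)`,
an element of the tensor algebra `T(E)` (modelled as the free algebra on `E`). -/
def ecoef (π : List G.E) (k : ℕ) : FreeAlgebra F G.E :=
  ((-1 : F) ^ k) • ((π.sublistsLen k).map fun l => (l.map (FreeAlgebra.ι F)).prod).sum

/-- The two-sided ideal generated by a set, as a submodule. -/
def twoSidedSpan {A : Type} [Ring A] [Algebra F A] (S : Set A) : Submodule F A :=
  Submodule.span F {x | ∃ a s b, s ∈ S ∧ x = a * s * b}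

/-- The defining ideal `R` of `A(Γ)`, generated by the differences
`e(π₁,k) - e(π₂,k)` over pairs of paths with the same tail and the same head. -/
def Rideal : Submodule F (FreeAlgebra F G.E) :=
  twoSidedSpan F {x | ∃ π₁ π₂ k, G.IsPathList π₁ ∧ G.IsPathList π₂ ∧
    G.firstV π₁ = G.firstV π₂ ∧ G.lastV π₁ = G.lastV π₂ ∧
    1 ≤ k ∧ k ≤ π₁.length ∧ x = G.ecoef F π₁ k - G.ecoef F π₂ k}

/-- A vertex viewed in `T(V⁺)` (the free algebra on `V⁺`), with `*` sent to `0`. -/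
def vert (v : G.V) : FreeAlgebra F G.Vp :=
  if h : G.rank v = 0 then 0 else FreeAlgebra.ι F (⟨v, h⟩ : G.Vp)

/-- The algebra homomorphism `θ : T(E) → T(V⁺)`, induced by `e ↦ t(e) - h(e)`. -/
def theta : FreeAlgebra F G.E →ₐ[F] FreeAlgebra F G.Vp :=
  FreeAlgebra.lift F fun e => G.vert F (G.tail e) - G.vert F (G.head e)

/-- The filtration `T(E)_i` of `T(E)`, where an edge `e` has degree `|t(e)|`. -/
def filtE (i : ℕ) : Submodule F (FreeAlgebra F G.E) :=
  Submodule.span F {x | ∃ l : List G.E, (l.map fun e => G.rank (G.tail e)).sum ≤ i ∧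
    x = (l.map (FreeAlgebra.ι F)).prod}

/-- The homogeneous component `T(V⁺)_[i]` of `T(V⁺)`,
where a vertex has degree equal to its rank. -/
def homogV (i : ℕ) : Submodule F (FreeAlgebra F G.Vp) :=
  Submodule.span F {x | ∃ l : List G.Vp, (l.map fun p => G.rank p.1).sum = i ∧
    x = (l.map (FreeAlgebra.ι F)).prod}

/-- The filtration `T(V⁺)_i` of `T(V⁺)` induced by the vertex grading. -/
def filtV (i : ℕ) : Submodule F (FreeAlgebra F G.Vp) :=
  Submodule.span F {x | ∃ l : List G.Vp, (l.map fun p => G.rank p.1).sum ≤ i ∧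
    x = (l.map (FreeAlgebra.ι F)).prod}

/-- The associated graded ideal `gr I` of an ideal `I ⊆ T(V⁺)`: its degree-`k`
component is `T(V⁺)_[k] ∩ (T(V⁺)_{k-1} + I)`. -/
def grIdeal (I : Submodule F (FreeAlgebra F G.Vp)) : Submodule F (FreeAlgebra F G.Vp) :=
  ⨆ k, G.homogV F k ⊓ ((⨆ j, ⨆ _ : j < k, G.homogV F j) ⊔ I)

/-- The monomial `v(π,k) = v₀v₁⋯v_{k-1} ∈ T(V⁺)` attached to a path `π`. -/
def vmon (π : List G.E) (k : ℕ) : FreeAlgebra F G.Vp :=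
  (((G.pathVerts π).take k).map (G.vert F)).prod

/-- The ideal `R_gr ⊆ T(V⁺)`, generated by the differences `v(π₁,k) - v(π₂,k)`
over pairs of paths with common tail. -/
def Rgr : Submodule F (FreeAlgebra F G.Vp) :=
  twoSidedSpan F {x | ∃ π₁ π₂ k, G.IsPathList π₁ ∧ G.IsPathList π₂ ∧
    G.firstV π₁ = G.firstV π₂ ∧ 2 ≤ k ∧ k ≤ π₁.length ∧ k ≤ π₂.length ∧
    x = G.vmon F π₁ k - G.vmon F π₂ k}

/-- The degree-one subspace `V = F·V⁺ ⊆ T(V⁺)`. -/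
def Wone : Submodule F (FreeAlgebra F G.Vp) :=
  Submodule.span F (Set.range (FreeAlgebra.ι F))

/-- The quadratic relation space `R` of `gr A(Γ)`,
spanned by the elements `v(u - w)` with `u, w ∈ S₁(v)`. -/
def Rquad : Submodule F (FreeAlgebra F G.Vp) :=
  Submodule.span F {x | ∃ v u w, G.adj v u ∧ G.adj v w ∧
    x = G.vert F v * (G.vert F u - G.vert F w)}

/-- `S_j(v) = span{u : v > u, |u| = |v| - j}` (with `S₀(v) = span{v}`). -/
def Sspan (j : ℕ) (v : G.V) : Submodule F (FreeAlgebra F G.Vp) :=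
  Submodule.span F {x | ∃ u, G.SRel v u j ∧ x = G.vert F u}

/-- `P_j(v) = span{u - w : v > u, v > w, |u| = |w| = |v| - j}`. -/
def Pspan (j : ℕ) (v : G.V) : Submodule F (FreeAlgebra F G.Vp) :=
  Submodule.span F {x | ∃ u w, G.SRel v u j ∧ G.SRel v w j ∧
    x = G.vert F u - G.vert F w}

end LayeredGraph

/-- The elements of the sublattice generated by a family of subspaces. -/
inductive latGen {α : Type*} [Lattice α] (S : Set α) : α → Prop
  | base {x} : x ∈ S → latGen S x
  | inf {x y} : latGen S x → latGen S y → latGen S (x ⊓ y)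
  | sup {x y} : latGen S x → latGen S y → latGen S (x ⊔ y)

/-- A family of elements of a lattice is distributive if the sublattice
it generates is distributive. -/
def IsDistribFamily {α : Type*} [Lattice α] (S : Set α) : Prop :=
  ∀ x y z, latGen S x → latGen S y → latGen S z → x ⊓ (y ⊔ z) = (x ⊓ y) ⊔ (x ⊓ z)

/-- Backelin's criterion: a quadratic algebra `T(V)/(R)` (given by the degree-one
subspace `V` and the relation space `R ⊆ V⊗V` inside the tensor algebra) is Koszul
iff for each `k` the collection of subspaces `V^i R V^(k-i)` generates a
distributive lattice. -/
def IsKoszulQuad (F : Type) [Field F] {A : Type} [Ring A] [Algebra F A]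
    (W R : Submodule F A) : Prop :=
  ∀ k : ℕ, IsDistribFamily {X | ∃ i ≤ k, X = W ^ i * R * W ^ (k - i)}

end


namespace AQuad

open LayeredGraph

variable {G : LayeredGraph} {F : Type} [Field F]

/-! ### twoSidedSpan closure lemmas -/

theorem mem_tss {A : Type} [Ring A] [Algebra F A] {S : Set A} {s : A} (hs : s ∈ S) :
    s ∈ twoSidedSpan F S := by
  apply Submodule.subset_span
  exact ⟨1, s, 1, hs, by simp⟩

theorem tss_mul_left {A : Type} [Ring A] [Algebra F A] {S : Set A} {x : A} (c : A)
    (hx : x ∈ twoSidedSpan F S) : c * x ∈ twoSidedSpan F S := by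
  induction hx using Submodule.span_induction with
  | mem y hy =>
    obtain ⟨a, s, b, hs, rfl⟩ := hy
    exact Submodule.subset_span ⟨c * a, s, b, hs, by noncomm_ring⟩
  | zero => simp only [mul_zero]; exact zero_mem _
  | add y z _ _ hy hz => rw [mul_add]; exact add_mem hy hz
  | smul r y _ hy => rw [mul_smul_comm]; exact Submodule.smul_mem _ _ hy

theorem tss_mul_right {A : Type} [Ring A] [Algebra F A] {S : Set A} {x : A} (c : A)
    (hx : x ∈ twoSidedSpan F S) : x * c ∈ twoSidedSpan F S := by
  induction hx using Submodule.span_induction with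
  | mem y hy =>
    obtain ⟨a, s, b, hs, rfl⟩ := hy
    exact Submodule.subset_span ⟨a, s, b * c, hs, by noncomm_ring⟩
  | zero => simp only [zero_mul]; exact zero_mem _
  | add y z _ _ hy hz => rw [add_mul]; exact add_mem hy hz
  | smul r y _ hy => rw [smul_mul_assoc]; exact Submodule.smul_mem _ _ hy

/-! ### ecoef lemmas -/

theorem ecoef_zero (G : LayeredGraph) (F : Type) [Field F] (l : List G.E) :
    G.ecoef F l 0 = 1 := by
  simp [LayeredGraph.ecoef, List.sublistsLen_zero]

theorem ecoef_nil_succ (G : LayeredGraph) (F : Type) [Field F] (k : ℕ) :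
    G.ecoef F ([] : List G.E) (k + 1) = 0 := by
  have : (([] : List G.E).length < k + 1) := by simp
  simp [LayeredGraph.ecoef, List.sublistsLen_of_length_lt this]

theorem ecoef_cons (G : LayeredGraph) (F : Type) [Field F] (e : G.E) (l : List G.E) (k : ℕ) :
    G.ecoef F (e :: l) (k + 1)
      = G.ecoef F l (k + 1) - FreeAlgebra.ι F e * G.ecoef F l k := by
  unfold LayeredGraph.ecoef
  rw [List.sublistsLen_succ_cons, List.map_append, List.sum_append, smul_add]
  congr 1
  rw [List.map_map]
  have h1 : ((List.sublistsLen k l).map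
      ((fun l' : List G.E => (l'.map (FreeAlgebra.ι F)).prod) ∘ (List.cons e)))
      = (List.sublistsLen k l).map
        (fun l' : List G.E => FreeAlgebra.ι F e * (l'.map (FreeAlgebra.ι F)).prod) := by
    apply List.map_congr_left
    intro a _
    simp [List.prod_cons]
  rw [h1]
  have h2 : ((List.sublistsLen k l).map
      (fun l' : List G.E => FreeAlgebra.ι F e * (l'.map (FreeAlgebra.ι F)).prod)).sum
      = FreeAlgebra.ι F e *
        ((List.sublistsLen k l).map (fun l' : List G.E => (l'.map (FreeAlgebra.ι F)).prod)).sum := by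
    induction List.sublistsLen k l with
    | nil => simp
    | cons a t ih => simp [ih, mul_add]
  rw [h2, pow_succ, mul_comm ((-1 : F) ^ k), mul_smul, mul_smul_comm, neg_one_smul]

theorem ecoef_of_lt (G : LayeredGraph) (F : Type) [Field F] {l : List G.E} {k : ℕ}
    (h : l.length < k) : G.ecoef F l k = 0 := by
  simp [LayeredGraph.ecoef, List.sublistsLen_of_length_lt h]

theorem ecoef_one (G : LayeredGraph) (F : Type) [Field F] (l : List G.E) :
    G.ecoef F l 1 = -((l.map (FreeAlgebra.ι F)).sum) := by
  induction l with
  | nil => simp [ecoef_nil_succ]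
  | cons e t ih =>
    rw [ecoef_cons, ih, ecoef_zero, mul_one, List.map_cons, List.sum_cons]
    abel

theorem ecoef_append (G : LayeredGraph) (F : Type) [Field F] (l₁ l₂ : List G.E) (k : ℕ) :
    G.ecoef F (l₁ ++ l₂) k
      = ∑ j ∈ Finset.range (k + 1), G.ecoef F l₁ j * G.ecoef F l₂ (k - j) := by
  induction l₁ generalizing k with
  | nil =>
    rw [List.nil_append]
    rw [Finset.sum_eq_single 0]
    · simp [ecoef_zero]
    · intro j _ hj
      obtain ⟨j', rfl⟩ := Nat.exists_eq_succ_of_ne_zero hj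
      rw [ecoef_nil_succ, zero_mul]
    · intro h; exact absurd (Finset.mem_range.2 (Nat.succ_pos k)) h
  | cons e t ih =>
    cases k with
    | zero => simp [ecoef_zero]
    | succ K =>
      rw [List.cons_append, ecoef_cons, ih, ih]
      rw [Finset.sum_range_succ' (fun j => G.ecoef F (e :: t) j * G.ecoef F l₂ (K + 1 - j)) (K + 1)]
      have hsub : ∀ j, K + 1 - (j + 1) = K - j := fun j => by omega
      calc (∑ j ∈ Finset.range (K + 2), G.ecoef F t j * G.ecoef F l₂ (K + 1 - j))
            - FreeAlgebra.ι F e * ∑ j ∈ Finset.range (K + 1), G.ecoef F t j * G.ecoef F l₂ (K - j)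
          = (∑ j ∈ Finset.range (K + 1),
              (G.ecoef F t (j + 1) - FreeAlgebra.ι F e * G.ecoef F t j) * G.ecoef F l₂ (K - j))
            + G.ecoef F t 0 * G.ecoef F l₂ (K + 1) := by
            rw [Finset.sum_range_succ' (fun j => G.ecoef F t j * G.ecoef F l₂ (K + 1 - j)) (K + 1)]
            rw [Finset.mul_sum]
            simp only [hsub, Nat.sub_zero, sub_mul]
            rw [Finset.sum_sub_distrib]
            simp only [mul_assoc]
            abel
          _ = (∑ j ∈ Finset.range (K + 1), G.ecoef F (e :: t) (j + 1) * G.ecoef F l₂ (K + 1 - (j + 1)))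
            + G.ecoef F (e :: t) 0 * G.ecoef F l₂ (K + 1 - 0) := by
            simp only [ecoef_cons, hsub, Nat.sub_zero, ecoef_zero]

/-! ### Chains down to rank zero -/

inductive Chain0 (G : LayeredGraph) : G.V → List G.E → Prop
  | nil (v) (h : G.rank v = 0) : Chain0 G v []
  | cons (e : G.E) (l) (h : Chain0 G (G.head e) l) : Chain0 G (G.tail e) (e :: l)

theorem exists_chain0 (hfull : G.EdgeFull) (v : G.V) : ∃ l, Chain0 G v l := by
  suffices h : ∀ n v, G.rank v ≤ n → ∃ l, Chain0 G v l from h (G.rank v) v le_rfl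
  intro n
  induction n with
  | zero => exact fun v hv => ⟨[], Chain0.nil v (Nat.le_zero.1 hv)⟩
  | succ n ih =>
    intro v hv
    rcases Nat.eq_zero_or_pos (G.rank v) with h0 | hpos
    · exact ⟨[], Chain0.nil v h0⟩
    · obtain ⟨e, he⟩ := hfull v (by omega)
      have hr : G.rank (G.head e) ≤ n := by
        have := G.rank_tail e; rw [he] at this; omega
      obtain ⟨l, hl⟩ := ih (G.head e) hr
      exact ⟨e :: l, he ▸ Chain0.cons e l hl⟩

theorem chain0_nil_rank {v : G.V} (h : Chain0 G v []) : G.rank v = 0 := by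
  cases h with | nil _ h => exact h

theorem chain0_cons_elim {v : G.V} {e : G.E} {l : List G.E} (h : Chain0 G v (e :: l)) :
    G.tail e = v ∧ Chain0 G (G.head e) l := by
  cases h with | cons _ _ h => exact ⟨rfl, h⟩

theorem chain0_chain' {v : G.V} {l : List G.E} (h : Chain0 G v l) :
    l.Chain' (fun e f => G.head e = G.tail f) := by
  induction h with
  | nil => exact List.isChain_nil
  | cons e l h ih =>
    cases l with
    | nil => exact List.isChain_singleton _
    | cons f t =>
      obtain ⟨hf, _⟩ := chain0_cons_elim h
      exact List.isChain_cons_cons.2 ⟨hf.symm, ih⟩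

theorem chain0_firstV {v : G.V} {e : G.E} {l : List G.E} (h : Chain0 G v (e :: l)) :
    G.firstV (e :: l) = some v := by
  obtain ⟨he, _⟩ := chain0_cons_elim h
  simp [LayeredGraph.firstV, he]

theorem chain0_firstV' {v : G.V} {l : List G.E} (h : Chain0 G v l) (hne : l ≠ []) :
    G.firstV l = some v := by
  cases h with
  | nil => exact absurd rfl hne
  | cons e t h => simp [LayeredGraph.firstV]

theorem chain0_lastV (hmin : G.HasUniqueMin) {v : G.V} {l : List G.E} (h : Chain0 G v l)
    (hne : l ≠ []) : G.lastV l = some hmin.choose := by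
  induction h with
  | nil => exact absurd rfl hne
  | cons e l h ih =>
    cases l with
    | nil =>
      have h0 : G.rank (G.head e) = 0 := chain0_nil_rank h
      have := hmin.choose_spec.2 (G.head e) h0
      simp [LayeredGraph.lastV, this]
    | cons f t =>
      rw [LayeredGraph.lastV] at ih ⊢
      rw [List.getLast?_cons_cons]
      exact ih (by simp)

theorem chain0_isPathList {v : G.V} {e : G.E} {l : List G.E} (h : Chain0 G v (e :: l)) :
    G.IsPathList (e :: l) := ⟨by simp, chain0_chain' h⟩

theorem chain0_append {v x : G.V} {l₁ l₂ : List G.E} (h₁ : Chain0 G v l₁)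
    (hx : G.lastV l₁ = some x ∨ (l₁ = [] ∧ v = x)) (h₂ : Chain0 G x l₂) : True := trivial

theorem theta_ι (G : LayeredGraph) (F : Type) [Field F] (e : G.E) :
    G.theta F (FreeAlgebra.ι F e) = G.vert F (G.tail e) - G.vert F (G.head e) := by
  simp [LayeredGraph.theta]

theorem theta_sum_chain0 {v : G.V} {l : List G.E} (h : Chain0 G v l) :
    G.theta F ((l.map (FreeAlgebra.ι F)).sum) = G.vert F v := by
  induction h with
  | nil v h => simp [LayeredGraph.vert, h]
  | cons e l h ih =>
    rw [List.map_cons, List.sum_cons, map_add, theta_ι, ih]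
    abel


/-! ### The quadratic relation set -/

def quadSet (G : LayeredGraph) (F : Type) [Field F] : Set (FreeAlgebra F G.Vp) :=
  {x : FreeAlgebra F G.Vp | ∃ v u w y, G.adj v u ∧ G.adj v w ∧
    G.adj u y ∧ G.adj w y ∧
    x = G.vert F v * (G.vert F u - G.vert F w)
      - G.vert F u * G.vert F u + G.vert F w * G.vert F w
      + (G.vert F u - G.vert F w) * G.vert F y}

/-- The middle step: two length-2 detours through a common grandchild. -/
theorem middle_step (G : LayeredGraph) (F : Type) [Field F]
    {v a b x : G.V} {e p f q : G.E} (γ : List G.E)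
    (hev : G.tail e = v) (hea : G.head e = a) (hpa : G.tail p = a) (hpx : G.head p = x)
    (hfv : G.tail f = v) (hfb : G.head f = b) (hqb : G.tail q = b) (hqx : G.head q = x)
    (k : ℕ) :
    G.theta F (G.ecoef F (e :: p :: γ) k) - G.theta F (G.ecoef F (f :: q :: γ) k)
      ∈ twoSidedSpan F (quadSet G F) := by
  match k with
  | 0 =>
    rw [ecoef_zero, ecoef_zero, sub_self]
    exact zero_mem _
  | 1 =>
    have key : G.theta F (G.ecoef F (e :: p :: γ) 1) - G.theta F (G.ecoef F (f :: q :: γ) 1)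
        = 0 := by
      have h1 : (1 : ℕ) = 0 + 1 := rfl
      rw [h1, ecoef_cons, ecoef_cons, ecoef_cons, ecoef_cons]
      simp only [ecoef_zero, map_sub, map_mul, map_one, theta_ι, hev, hea, hpa, hpx,
        hfv, hfb, hqb, hqx]
      noncomm_ring
    rw [key]
    exact zero_mem _
  | (K + 2) =>
    have key : G.theta F (G.ecoef F (e :: p :: γ) (K + 2))
          - G.theta F (G.ecoef F (f :: q :: γ) (K + 2))
        = (G.vert F v * (G.vert F a - G.vert F b)
            - G.vert F a * G.vert F a + G.vert F b * G.vert F b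
            + (G.vert F a - G.vert F b) * G.vert F x) * G.theta F (G.ecoef F γ K) := by
      rw [ecoef_cons, ecoef_cons, ecoef_cons, ecoef_cons, ecoef_cons, ecoef_cons]
      simp only [map_sub, map_mul, theta_ι, hev, hea, hpa, hpx, hfv, hfb, hqb, hqx]
      noncomm_ring
    rw [key]
    exact tss_mul_right _ (mem_tss
      ⟨v, a, b, x, ⟨e, hev, hea⟩, ⟨f, hfv, hfb⟩, ⟨p, hpa, hpx⟩, ⟨q, hqb, hqx⟩, rfl⟩)

/-- The main lemma: images of `e(π,k)` in `T(V⁺)/R_V` depend only on the initial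
vertex, for full chains down to rank 0. -/
theorem main_lemma (hu : G.Uniform) (hmin : G.HasUniqueMin) (hfull : G.EdgeFull) :
    ∀ n (v : G.V), G.rank v ≤ n → ∀ l₁ l₂, Chain0 G v l₁ → Chain0 G v l₂ →
      ∀ k, G.theta F (G.ecoef F l₁ k) - G.theta F (G.ecoef F l₂ k)
        ∈ twoSidedSpan F (quadSet G F) := by
  intro n
  induction n with
  | zero =>
    intro v hv l₁ l₂ h₁ h₂ k
    have hnil : ∀ l, Chain0 G v l → l = [] := by
      intro l hl
      cases hl with
      | nil => rfl
      | cons e t h => have := G.rank_tail e; omega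
    rw [hnil l₁ h₁, hnil l₂ h₂, sub_self]
    exact zero_mem _
  | succ n ih =>
    intro v hv l₁ l₂ h₁ h₂ k
    -- same-head-vertex comparison, using the inductive hypothesis
    have L1 : ∀ (a : G.V), G.rank a ≤ n → ∀ (e f : G.E) (la lb : List G.E),
        G.tail e = G.tail f → G.head e = a → G.head f = a →
        Chain0 G a la → Chain0 G a lb → ∀ k,
        G.theta F (G.ecoef F (e :: la) k) - G.theta F (G.ecoef F (f :: lb) k)
          ∈ twoSidedSpan F (quadSet G F) := by
      intro a ha e' f' la lb hef he' hf' hla hlb k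
      cases k with
      | zero => rw [ecoef_zero, ecoef_zero, sub_self]; exact zero_mem _
      | succ k =>
        rw [ecoef_cons, ecoef_cons, map_sub, map_sub, map_mul, map_mul, theta_ι, theta_ι,
          ← hef, he', hf']
        have h1 := ih a ha la lb hla hlb (k + 1)
        have h0 := tss_mul_left (G.vert F (G.tail e') - G.vert F a) (ih a ha la lb hla hlb k)
        have heq : G.theta F (G.ecoef F la (k + 1))
              - (G.vert F (G.tail e') - G.vert F a) * G.theta F (G.ecoef F la k)
              - (G.theta F (G.ecoef F lb (k + 1))
                - (G.vert F (G.tail e') - G.vert F a) * G.theta F (G.ecoef F lb k))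
            = (G.theta F (G.ecoef F la (k + 1)) - G.theta F (G.ecoef F lb (k + 1)))
              - (G.vert F (G.tail e') - G.vert F a)
                * (G.theta F (G.ecoef F la k) - G.theta F (G.ecoef F lb k)) := by
          noncomm_ring
        rw [heq]
        exact sub_mem h1 h0
    cases l₁ with
    | nil =>
      have h0 := chain0_nil_rank h₁
      cases l₂ with
      | nil => rw [sub_self]; exact zero_mem _
      | cons f t₂ =>
        obtain ⟨hfv, ht₂⟩ := chain0_cons_elim h₂
        have := G.rank_tail f; rw [hfv] at this; omega
    | cons e t₁ =>
      obtain ⟨hev, ht₁⟩ := chain0_cons_elim h₁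
      cases l₂ with
      | nil =>
        have h0 := chain0_nil_rank h₂
        have := G.rank_tail e; rw [hev] at this; omega
      | cons f t₂ =>
        obtain ⟨hfv, ht₂⟩ := chain0_cons_elim h₂
        have hru : G.rank (G.head e) + 1 = G.rank v := by
          have := G.rank_tail e; rw [hev] at this; omega
        have hrw : G.rank (G.head f) + 1 = G.rank v := by
          have := G.rank_tail f; rw [hfv] at this; omega
        by_cases huw : G.head e = G.head f
        · exact L1 (G.head e) (by omega) e f t₁ t₂ (by rw [hev, hfv]) rfl huw.symm ht₁
            (by rw [huw]; exact ht₂) k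
        · have h2 : 2 ≤ G.rank v := by
            rcases Nat.lt_or_ge (G.rank v) 2 with hlt | hge
            · exfalso
              obtain ⟨s, hs0, hsuniq⟩ := hmin
              exact huw (((hsuniq _ (by omega)).trans (hsuniq _ (by omega)).symm))
            · exact hge
          have heqv := hu v (G.head e) (G.head f) h2 ⟨e, hev, rfl⟩ ⟨f, hfv, rfl⟩
          have claim : ∀ a b, Relation.EqvGen
              (fun a b => G.adj v a ∧ G.adj v b ∧ ∃ x, G.adj a x ∧ G.adj b x) a b →
              a = b ∨ (G.adj v a ∧ G.adj v b ∧
                ∀ (e f : G.E) (la lb : List G.E), G.tail e = v → G.head e = a →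
                  G.tail f = v → G.head f = b → Chain0 G a la → Chain0 G b lb → ∀ k,
                  G.theta F (G.ecoef F (e :: la) k) - G.theta F (G.ecoef F (f :: lb) k)
                    ∈ twoSidedSpan F (quadSet G F)) := by
            intro a b hab
            induction hab with
            | rel a b hr =>
              right
              obtain ⟨hva, hvb, x, hax, hbx⟩ := hr
              refine ⟨hva, hvb, ?_⟩
              intro e' f' la lb hev' hea hfv' hfb hla hlb k
              obtain ⟨p, hpa, hpx⟩ := hax
              obtain ⟨q, hqb, hqx⟩ := hbx
              obtain ⟨γ, hγ⟩ := exists_chain0 hfull x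
              have hra : G.rank a ≤ n := by
                have := G.rank_tail e'; rw [hev', hea] at this; omega
              have hrb : G.rank b ≤ n := by
                have := G.rank_tail f'; rw [hfv', hfb] at this; omega
              have hpγ : Chain0 G a (p :: γ) := by
                rw [← hpa]
                exact Chain0.cons p γ (by rw [hpx]; exact hγ)
              have hqγ : Chain0 G b (q :: γ) := by
                rw [← hqb]
                exact Chain0.cons q γ (by rw [hqx]; exact hγ)
              have s1 := L1 a hra e' e' la (p :: γ) rfl hea hea hla hpγ k
              have s2 := middle_step G F γ hev' hea hpa hpx hfv' hfb hqb hqx k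
              have s3 := L1 b hrb f' f' (q :: γ) lb rfl hfb hfb hqγ hlb k
              have hsum : G.theta F (G.ecoef F (e' :: la) k)
                    - G.theta F (G.ecoef F (f' :: lb) k)
                  = (G.theta F (G.ecoef F (e' :: la) k)
                      - G.theta F (G.ecoef F (e' :: p :: γ) k))
                    + (G.theta F (G.ecoef F (e' :: p :: γ) k)
                        - G.theta F (G.ecoef F (f' :: q :: γ) k))
                    + (G.theta F (G.ecoef F (f' :: q :: γ) k)
                        - G.theta F (G.ecoef F (f' :: lb) k)) := by abel
              rw [hsum]
              exact add_mem (add_mem s1 s2) s3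
            | refl a => exact Or.inl rfl
            | symm a b h hab' =>
              rcases hab' with rfl | ⟨hva, hvb, hq⟩
              · exact Or.inl rfl
              · right
                refine ⟨hvb, hva, ?_⟩
                intro e' f' la lb hev' hea hfv' hfb hla hlb k
                have hm := hq f' e' lb la hfv' hfb hev' hea hlb hla k
                rw [← neg_sub]
                exact neg_mem hm
            | trans a b c hab hbc hab' hbc' =>
              rcases hab' with rfl | ⟨hva, hvb, h1⟩
              · exact hbc'
              rcases hbc' with rfl | ⟨hvb', hvc, h2⟩
              · exact Or.inr ⟨hva, hvb, h1⟩
              right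
              refine ⟨hva, hvc, ?_⟩
              intro e' f' la lb hev' hea hfv' hfb hla hlb k
              obtain ⟨g, hgv, hgb⟩ := hvb
              obtain ⟨lbmid, hlbmid⟩ := exists_chain0 hfull b
              have m1 := h1 e' g la lbmid hev' hea hgv hgb hla hlbmid k
              have m2 := h2 g f' lbmid lb hgv hgb hfv' hfb hlbmid hlb k
              have hsplit : G.theta F (G.ecoef F (e' :: la) k)
                    - G.theta F (G.ecoef F (f' :: lb) k)
                  = (G.theta F (G.ecoef F (e' :: la) k)
                      - G.theta F (G.ecoef F (g :: lbmid) k))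
                    + (G.theta F (G.ecoef F (g :: lbmid) k)
                        - G.theta F (G.ecoef F (f' :: lb) k)) := by abel
              rw [hsplit]
              exact add_mem m1 m2
          rcases claim (G.head e) (G.head f) heqv with hEq | ⟨_, _, hQ⟩
          · exact absurd hEq huw
          · exact hQ e f t₁ t₂ hev rfl hfv rfl ht₁ ht₂ k

theorem chain0_of_path {v x : G.V} : ∀ (π : List G.E),
    π.Chain' (fun e f => G.head e = G.tail f) →
    G.firstV π = some v → G.lastV π = some x → ∀ {σ}, Chain0 G x σ →
    Chain0 G v (π ++ σ) := by
  intro π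
  induction π generalizing v with
  | nil => intro _ h; simp [LayeredGraph.firstV] at h
  | cons e t ih =>
    intro hch hf hl σ hσ
    have hv : G.tail e = v := by
      simpa [LayeredGraph.firstV] using hf
    cases t with
    | nil =>
      have hx : G.head e = x := by
        simpa [LayeredGraph.lastV] using hl
      rw [← hv, List.cons_append, List.nil_append]
      exact Chain0.cons e σ (by rw [hx]; exact hσ)
    | cons f t' =>
      have hch' := List.isChain_cons_cons.1 hch
      have hl' : G.lastV (f :: t') = some x := by
        rw [LayeredGraph.lastV] at hl ⊢
        rwa [List.getLast?_cons_cons] at hl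
      have hmid : Chain0 G (G.tail f) ((f :: t') ++ σ) :=
        ih hch'.2 (by simp [LayeredGraph.firstV]) hl' hσ
      rw [← hv, List.cons_append]
      exact Chain0.cons e _ (by rw [hch'.1]; exact hmid)

theorem same_endpoints (hu : G.Uniform) (hmin : G.HasUniqueMin) (hfull : G.EdgeFull)
    {π₁ π₂ : List G.E} (h₁ : G.IsPathList π₁) (h₂ : G.IsPathList π₂)
    (hf : G.firstV π₁ = G.firstV π₂) (hl : G.lastV π₁ = G.lastV π₂) (k : ℕ) :
    G.theta F (G.ecoef F π₁ k) - G.theta F (G.ecoef F π₂ k)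
      ∈ twoSidedSpan F (quadSet G F) := by
  obtain ⟨v, hv₁⟩ : ∃ v, G.firstV π₁ = some v := by
    cases π₁ with
    | nil => exact absurd rfl h₁.1
    | cons e t => exact ⟨G.tail e, rfl⟩
  obtain ⟨x, hx₁⟩ : ∃ x, G.lastV π₁ = some x := by
    rw [LayeredGraph.lastV]
    obtain ⟨e, he⟩ := Option.isSome_iff_exists.1 ((List.getLast?_isSome).2 h₁.1)
    exact ⟨G.head e, by rw [he]; rfl⟩
  obtain ⟨σ, hσ⟩ := exists_chain0 hfull x
  have c₁ : Chain0 G v (π₁ ++ σ) := chain0_of_path π₁ h₁.2 hv₁ hx₁ hσ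
  have c₂ : Chain0 G v (π₂ ++ σ) :=
    chain0_of_path π₂ h₂.2 (hf ▸ hv₁) (hl ▸ hx₁) hσ
  have base := main_lemma (F := F) hu hmin hfull (G.rank v) v le_rfl _ _ c₁ c₂
  induction k using Nat.strong_induction_on with
  | _ k ihk =>
    have hk := base k
    rw [ecoef_append, ecoef_append] at hk
    simp only [map_sum] at hk
    simp only [Finset.sum_range_succ, Nat.sub_self, ecoef_zero, mul_one] at hk
    have hsum : (∑ j ∈ Finset.range k,
        (G.theta F (G.ecoef F π₁ j * G.ecoef F σ (k - j))
          - G.theta F (G.ecoef F π₂ j * G.ecoef F σ (k - j))))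
        ∈ twoSidedSpan F (quadSet G F) := by
      apply Submodule.sum_mem
      intro j hj
      rw [map_mul, map_mul, ← sub_mul]
      exact tss_mul_right _ (ihk j (Finset.mem_range.1 hj))
    have hkey : G.theta F (G.ecoef F π₁ k) - G.theta F (G.ecoef F π₂ k)
        = ((∑ j ∈ Finset.range k, G.theta F (G.ecoef F π₁ j * G.ecoef F σ (k - j)))
            + G.theta F (G.ecoef F π₁ k)
          - ((∑ j ∈ Finset.range k, G.theta F (G.ecoef F π₂ j * G.ecoef F σ (k - j)))
            + G.theta F (G.ecoef F π₂ k)))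
          - ∑ j ∈ Finset.range k,
            (G.theta F (G.ecoef F π₁ j * G.ecoef F σ (k - j))
              - G.theta F (G.ecoef F π₂ j * G.ecoef F σ (k - j))) := by
      rw [Finset.sum_sub_distrib]
      abel
    rw [hkey]
    exact sub_mem hk hsum

theorem theta_Rideal (hu : G.Uniform) (hmin : G.HasUniqueMin) (hfull : G.EdgeFull)
    {x : FreeAlgebra F G.E} (hx : x ∈ G.Rideal F) :
    G.theta F x ∈ twoSidedSpan F (quadSet G F) := by
  induction hx using Submodule.span_induction with
  | mem y hy =>
    obtain ⟨a, s, b, ⟨π₁, π₂, k, h₁, h₂, hfv, hlv, _, _, rfl⟩, rfl⟩ := hy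
    rw [map_mul, map_mul, map_sub, mul_assoc]
    exact tss_mul_left _ (tss_mul_right _ (same_endpoints hu hmin hfull h₁ h₂ hfv hlv k))
  | zero => rw [map_zero]; exact zero_mem _
  | add y z _ _ hy hz => rw [map_add]; exact add_mem hy hz
  | smul r y _ hy => rw [map_smul]; exact Submodule.smul_mem _ _ hy

/-! ### The section `ψ` -/

noncomputable def psiV (G : LayeredGraph) (F : Type) [Field F] (hfull : G.EdgeFull) (v : G.V) :
    FreeAlgebra F G.E :=
  (((exists_chain0 hfull v).choose).map (FreeAlgebra.ι F)).sum

theorem psiV_chain (hfull : G.EdgeFull) (v : G.V) :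
    Chain0 G v (exists_chain0 hfull v).choose :=
  (exists_chain0 hfull v).choose_spec

theorem chain0_nil_of_rank0 {v : G.V} {l : List G.E} (h : Chain0 G v l) (h0 : G.rank v = 0) :
    l = [] := by
  cases h with
  | nil => rfl
  | cons e t => have := G.rank_tail e; omega

theorem psiV_rank0 (hfull : G.EdgeFull) {v : G.V} (h0 : G.rank v = 0) :
    psiV G F hfull v = 0 := by
  rw [psiV, chain0_nil_of_rank0 (psiV_chain hfull v) h0]
  simp

theorem theta_psiV (hfull : G.EdgeFull) (v : G.V) :
    G.theta F (psiV G F hfull v) = G.vert F v :=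
  theta_sum_chain0 (psiV_chain hfull v)

theorem chain0_length_pos {v : G.V} {l : List G.E} (h : Chain0 G v l) (h0 : G.rank v ≠ 0) :
    1 ≤ l.length := by
  cases h with
  | nil _ hr => exact absurd hr h0
  | cons e t => simp

/-- Key degree-1 relation: `ψ(t(e)) - e - ψ(h(e)) ∈ R`. -/
theorem key1 (hmin : G.HasUniqueMin) (hfull : G.EdgeFull) (e : G.E) :
    psiV G F hfull (G.tail e) - FreeAlgebra.ι F e - psiV G F hfull (G.head e)
      ∈ G.Rideal F := by
  set π₁ := (exists_chain0 hfull (G.tail e)).choose with hπ₁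
  set π₂ := e :: (exists_chain0 hfull (G.head e)).choose with hπ₂
  have h₁ : Chain0 G (G.tail e) π₁ := psiV_chain hfull _
  have h₂ : Chain0 G (G.tail e) π₂ := Chain0.cons e _ (psiV_chain hfull _)
  have hr : G.rank (G.tail e) ≠ 0 := by have := G.rank_tail e; omega
  have hne₁ : π₁ ≠ [] := by
    intro h
    exact hr (chain0_nil_rank (h ▸ h₁))
  have hgen : G.ecoef F π₁ 1 - G.ecoef F π₂ 1 ∈ G.Rideal F := by
    apply Submodule.subset_span
    refine ⟨1, G.ecoef F π₁ 1 - G.ecoef F π₂ 1, 1,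
      ⟨π₁, π₂, 1, ⟨hne₁, chain0_chain' h₁⟩, chain0_isPathList h₂, ?_, ?_, le_rfl,
        chain0_length_pos h₁ hr, rfl⟩, by simp⟩
    · rw [chain0_firstV' h₁ hne₁, chain0_firstV' h₂ (by rw [hπ₂]; simp)]
    · rw [chain0_lastV hmin h₁ hne₁, chain0_lastV hmin h₂ (by rw [hπ₂]; simp)]
  have hval : psiV G F hfull (G.tail e) - FreeAlgebra.ι F e - psiV G F hfull (G.head e)
      = -(G.ecoef F π₁ 1 - G.ecoef F π₂ 1) := by
    rw [ecoef_one, ecoef_one, psiV, psiV, ← hπ₁, hπ₂, List.map_cons, List.sum_cons]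
    abel
  rw [hval]
  exact neg_mem hgen

theorem ecoef_pair (G : LayeredGraph) (F : Type) [Field F] (a b : G.E) :
    G.ecoef F [a, b] 2 = FreeAlgebra.ι F a * FreeAlgebra.ι F b := by
  have h0 : G.ecoef F [b] (1 + 1) = 0 := ecoef_of_lt G F (by simp)
  rw [show (2 : ℕ) = 1 + 1 from rfl, ecoef_cons, h0, ecoef_one]
  simp

/-- Key degree-2 relation. -/
theorem key2_sq (hmin : G.HasUniqueMin) (hfull : G.EdgeFull)
    {v u w y : G.V} {e1 e2 e3 e4 : G.E}
    (h1v : G.tail e1 = v) (h1u : G.head e1 = u) (h2v : G.tail e2 = v) (h2w : G.head e2 = w)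
    (h3u : G.tail e3 = u) (h3y : G.head e3 = y) (h4w : G.tail e4 = w) (h4y : G.head e4 = y) :
    (FreeAlgebra.ι F e1 * FreeAlgebra.ι F e3 - FreeAlgebra.ι F e2 * FreeAlgebra.ι F e4
      ∈ G.Rideal F) ∧
    ((FreeAlgebra.ι F e1 + FreeAlgebra.ι F e3) - (FreeAlgebra.ι F e2 + FreeAlgebra.ι F e4)
      ∈ G.Rideal F) := by
  have hp₁ : G.IsPathList [e1, e3] := ⟨by simp, by
    refine List.isChain_cons_cons.2 ⟨by rw [h1u, h3u], ?_⟩; simp⟩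
  have hp₂ : G.IsPathList [e2, e4] := ⟨by simp, by
    refine List.isChain_cons_cons.2 ⟨by rw [h2w, h4w], ?_⟩; simp⟩
  have hfv : G.firstV [e1, e3] = G.firstV [e2, e4] := by
    simp [LayeredGraph.firstV, h1v, h2v]
  have hlv : G.lastV [e1, e3] = G.lastV [e2, e4] := by
    simp [LayeredGraph.lastV, h3y, h4y]
  constructor
  · have hgen : G.ecoef F [e1, e3] 2 - G.ecoef F [e2, e4] 2 ∈ G.Rideal F :=
      Submodule.subset_span ⟨1, _, 1,
        ⟨[e1, e3], [e2, e4], 2, hp₁, hp₂, hfv, hlv, by omega, by simp, rfl⟩, by simp⟩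
    rwa [ecoef_pair, ecoef_pair] at hgen
  · have hgen : G.ecoef F [e1, e3] 1 - G.ecoef F [e2, e4] 1 ∈ G.Rideal F :=
      Submodule.subset_span ⟨1, _, 1,
        ⟨[e1, e3], [e2, e4], 1, hp₁, hp₂, hfv, hlv, by omega, by simp, rfl⟩, by simp⟩
    have heq : (FreeAlgebra.ι F e1 + FreeAlgebra.ι F e3)
          - (FreeAlgebra.ι F e2 + FreeAlgebra.ι F e4)
        = -(G.ecoef F [e1, e3] 1 - G.ecoef F [e2, e4] 1) := by
      rw [ecoef_one, ecoef_one]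
      simp only [List.map_cons, List.map_nil, List.sum_cons, List.sum_nil]
      abel
    rw [heq]
    exact neg_mem hgen

noncomputable def psi0 (G : LayeredGraph) (F : Type) [Field F] (hfull : G.EdgeFull) :
    FreeAlgebra F G.Vp →ₐ[F] FreeAlgebra F G.E :=
  FreeAlgebra.lift F (fun p : G.Vp => psiV G F hfull p.1)

theorem psi0_vert (hfull : G.EdgeFull) (z : G.V) :
    psi0 G F hfull (G.vert F z) = psiV G F hfull z := by
  rw [LayeredGraph.vert]
  split
  · rw [map_zero, psiV_rank0 hfull ‹_›]
  · exact FreeAlgebra.lift_ι_apply _ _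

theorem psi0_quad (hmin : G.HasUniqueMin) (hfull : G.EdgeFull)
    {s : FreeAlgebra F G.Vp} (hs : s ∈ quadSet G F) :
    psi0 G F hfull s ∈ G.Rideal F := by
  obtain ⟨v, u, w, y, ⟨e1, h1v, h1u⟩, ⟨e2, h2v, h2w⟩, ⟨e3, h3u, h3y⟩, ⟨e4, h4w, h4y⟩, rfl⟩ := hs
  obtain ⟨B1, B2⟩ := key2_sq (F := F) hmin hfull h1v h1u h2v h2w h3u h3y h4w h4y
  have A1 := key1 (F := F) hmin hfull e1
  have A2 := key1 (F := F) hmin hfull e2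
  have A3 := key1 (F := F) hmin hfull e3
  have A4 := key1 (F := F) hmin hfull e4
  rw [h1v, h1u] at A1
  rw [h2v, h2w] at A2
  rw [sub_right_comm] at A1
  rw [sub_right_comm] at A2
  rw [h3u, h3y] at A3
  rw [h4w, h4y] at A4
  set V := psiV G F hfull v
  set U := psiV G F hfull u
  set W := psiV G F hfull w
  set Y := psiV G F hfull y
  set i1 := FreeAlgebra.ι F e1
  set i2 := FreeAlgebra.ι F e2
  set i3 := FreeAlgebra.ι F e3
  set i4 := FreeAlgebra.ι F e4
  have hval : psi0 G F hfull (G.vert F v * (G.vert F u - G.vert F w)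
        - G.vert F u * G.vert F u + G.vert F w * G.vert F w
        + (G.vert F u - G.vert F w) * G.vert F y)
      = (V - U - i1) * U - (V - W - i2) * W + ((U - i3 - Y) - (W - i4 - Y)) * Y
        + i1 * (U - i3 - Y) - i2 * (W - i4 - Y)
        + (i1 * i3 - i2 * i4) + ((i1 + i3) - (i2 + i4)) * Y := by
    simp only [map_add, map_sub, map_mul, psi0_vert hfull]
    noncomm_ring
  rw [hval]
  refine add_mem (add_mem (sub_mem (add_mem (add_mem (sub_mem ?_ ?_) ?_) ?_) ?_) B1)
    (tss_mul_right _ B2)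
  · exact tss_mul_right _ A1
  · exact tss_mul_right _ A2
  · exact tss_mul_right _ (sub_mem A3 A4)
  · exact tss_mul_left _ A3
  · exact tss_mul_left _ A4

theorem psi0_tss (hmin : G.HasUniqueMin) (hfull : G.EdgeFull)
    {x : FreeAlgebra F G.Vp} (hx : x ∈ twoSidedSpan F (quadSet G F)) :
    psi0 G F hfull x ∈ G.Rideal F := by
  induction hx using Submodule.span_induction with
  | mem y hy =>
    obtain ⟨a, s, b, hs, rfl⟩ := hy
    rw [map_mul, map_mul, mul_assoc]
    exact tss_mul_left _ (tss_mul_right _ (psi0_quad hmin hfull hs))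
  | zero => rw [map_zero]; exact zero_mem _
  | add y z _ _ hy hz => rw [map_add]; exact add_mem hy hz
  | smul r y _ hy => rw [map_smul]; exact Submodule.smul_mem _ _ hy

/-! ### The isomorphism -/

theorem main_iso (G : LayeredGraph) (F : Type) [Field F]
    (hu : G.Uniform) (hmin : G.HasUniqueMin) (hfull : G.EdgeFull) :
    Nonempty (RingQuot (fun a b => a - b ∈ G.Rideal F) ≃ₐ[F]
      RingQuot (fun a b : FreeAlgebra F G.Vp => a - b ∈ twoSidedSpan F (quadSet G F))) := by
  set relR := fun a b : FreeAlgebra F G.E => a - b ∈ G.Rideal F with hrelR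
  set relQ := fun a b : FreeAlgebra F G.Vp => a - b ∈ twoSidedSpan F (quadSet G F) with hrelQ
  have hΦ : ∀ ⦃a b : FreeAlgebra F G.E⦄, relR a b →
      ((RingQuot.mkAlgHom F relQ).comp (G.theta F)) a
        = ((RingQuot.mkAlgHom F relQ).comp (G.theta F)) b := by
    intro a b hab
    apply RingQuot.mkAlgHom_rel
    show G.theta F a - G.theta F b ∈ twoSidedSpan F (quadSet G F)
    rw [← map_sub]
    exact theta_Rideal hu hmin hfull hab
  have hΨ : ∀ ⦃a b : FreeAlgebra F G.Vp⦄, relQ a b →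
      ((RingQuot.mkAlgHom F relR).comp (psi0 G F hfull)) a
        = ((RingQuot.mkAlgHom F relR).comp (psi0 G F hfull)) b := by
    intro a b hab
    apply RingQuot.mkAlgHom_rel
    show psi0 G F hfull a - psi0 G F hfull b ∈ G.Rideal F
    rw [← map_sub]
    exact psi0_tss hmin hfull hab
  refine ⟨AlgEquiv.ofAlgHom
    (RingQuot.liftAlgHom F ⟨(RingQuot.mkAlgHom F relQ).comp (G.theta F), hΦ⟩)
    (RingQuot.liftAlgHom F ⟨(RingQuot.mkAlgHom F relR).comp (psi0 G F hfull), hΨ⟩)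
    ?_ ?_⟩
  · apply RingQuot.ringQuot_ext'
    apply FreeAlgebra.hom_ext
    funext p
    simp only [Function.comp_apply, AlgHom.comp_apply, AlgHom.id_apply]
    rw [RingQuot.liftAlgHom_mkAlgHom_apply]
    simp only [AlgHom.comp_apply]
    have hp : psi0 G F hfull (FreeAlgebra.ι F p) = psiV G F hfull p.1 :=
      FreeAlgebra.lift_ι_apply _ _
    rw [hp, RingQuot.liftAlgHom_mkAlgHom_apply]
    simp only [AlgHom.comp_apply]
    rw [theta_psiV hfull]
    have hv : G.vert F p.1 = FreeAlgebra.ι F p := by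
      obtain ⟨pv, hp2⟩ := p
      rw [LayeredGraph.vert, dif_neg hp2]
    rw [hv]
  · apply RingQuot.ringQuot_ext'
    apply FreeAlgebra.hom_ext
    funext e
    simp only [Function.comp_apply, AlgHom.comp_apply, AlgHom.id_apply]
    rw [RingQuot.liftAlgHom_mkAlgHom_apply]
    simp only [AlgHom.comp_apply]
    rw [RingQuot.liftAlgHom_mkAlgHom_apply]
    simp only [AlgHom.comp_apply]
    rw [theta_ι, map_sub, psi0_vert hfull, psi0_vert hfull]
    apply RingQuot.mkAlgHom_rel
    show psiV G F hfull (G.tail e) - psiV G F hfull (G.head e) - FreeAlgebra.ι F e ∈ G.Rideal F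
    have := key1 (F := F) hmin hfull e
    rwa [sub_right_comm] at this

end AQuad

/-- Proposition 3.5: for a uniform layered graph with unique minimal
vertex, `A(Γ) ≅ T(V⁺)/R_V`, where `R_V` is generated by the quadratic elements
`v(u-w) - u² + w² + (u-w)x` over `v`, `u,w ∈ S₁(v)`, `x ∈ S₁(u) ∩ S₁(w)`. -/
theorem A_iso_quadratic_quotient (G : LayeredGraph) (F : Type) [Field F]
    (hu : G.Uniform) (hmin : G.HasUniqueMin) (hfull : G.EdgeFull) :
    Nonempty (RingQuot (fun a b => a - b ∈ G.Rideal F) ≃ₐ[F]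
      RingQuot (fun a b => a - b ∈ LayeredGraph.twoSidedSpan F
        {x : FreeAlgebra F G.Vp | ∃ v u w y, G.adj v u ∧ G.adj v w ∧
          G.adj u y ∧ G.adj w y ∧
          x = G.vert F v * (G.vert F u - G.vert F w)
            - G.vert F u * G.vert F u + G.vert F w * G.vert F w
            + (G.vert F u - G.vert F w) * G.vert F y})) :=
  AQuad.main_iso G F hu hmin hfull
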